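/- arXiv:1909.06201 — 2 statements merged into one kernel-verified Lean document; each statement's English description precedes it below -/
import Mathlib

section
/- Let C be a topologically closed oligomorphic function clone on a countable set. If for every finite subset A of the domain there exist a 6-ary s ∈ C and unary α, β ∈ C with α(s(x,y,x,z,y,z)) = β(s(y,x,z,x,z,y)) for all x,y,z ∈ A, then there exist a 6-ary s ∈ C and unary α, β ∈ C satisfying α(s(x,y,x,z,y,z)) = β(s(y,x,z,x,z,y)) for all elements x,y,z of the domain. -/
/-- A function clone on ℕ (operations of positive arity `n+1`),
containing all projections and closed under composition. -/
structure CloneOn where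
  ops : ∀ n : ℕ, Set ((Fin (n + 1) → ℕ) → ℕ)
  proj_mem : ∀ (n : ℕ) (i : Fin (n + 1)), (fun x => x i) ∈ ops n
  comp_mem : ∀ (n m : ℕ) (f : (Fin (n + 1) → ℕ) → ℕ)
      (g : Fin (n + 1) → ((Fin (m + 1) → ℕ) → ℕ)),
      f ∈ ops n → (∀ i, g i ∈ ops m) →
      (fun x => f (fun i => g i x)) ∈ ops m

/-- `u : ℕ → ℕ` is a unary member of the clone. -/
def CloneOn.unaryMem (C : CloneOn) (u : ℕ → ℕ) : Prop :=
  (fun x : Fin 1 → ℕ => u (x 0)) ∈ C.ops 0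

/-- The clone is topologically closed (w.r.t. pointwise convergence): any operation which
agrees with some member of the clone on every finite set belongs to the clone. -/
def CloneOn.IsClosed (C : CloneOn) : Prop :=
  ∀ (n : ℕ) (f : (Fin (n + 1) → ℕ) → ℕ),
    (∀ F : Finset (Fin (n + 1) → ℕ), ∃ g ∈ C.ops n, ∀ x ∈ F, g x = f x) → f ∈ C.ops n

/-- `u` is an invertible unary member of the clone. -/
def CloneOn.Invertible (C : CloneOn) (u : ℕ → ℕ) : Prop :=
  C.unaryMem u ∧ ∃ v : ℕ → ℕ, C.unaryMem v ∧ (∀ x, v (u x) = x) ∧ (∀ x, u (v x) = x)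

/-- The clone is oligomorphic: its group of invertible unary members has finitely many
orbits on `k`-tuples, for every `k`. -/
def CloneOn.Oligo (C : CloneOn) : Prop :=
  ∀ k : ℕ, ∃ (N : ℕ) (reps : Fin N → (Fin k → ℕ)),
    ∀ x : Fin k → ℕ, ∃ (i : Fin N) (u : ℕ → ℕ),
      C.Invertible u ∧ (fun j => u (reps i j)) = x


namespace CloneOn
variable (C : CloneOn)

lemma unaryMem_comp {u v : ℕ → ℕ} (hu : C.unaryMem u) (hv : C.unaryMem v) :
    C.unaryMem (fun x => u (v x)) :=
  C.comp_mem 0 0 (fun x => u (x 0)) (fun _ => fun x => v (x 0)) hu (fun _ => hv)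

lemma unaryMem_id : C.unaryMem (fun x => x) := C.proj_mem 0 0

lemma invertible_id : C.Invertible (fun x => x) :=
  ⟨C.unaryMem_id, fun x => x, C.unaryMem_id, fun _ => rfl, fun _ => rfl⟩

lemma Invertible.comp' {u v : ℕ → ℕ} (hu : C.Invertible u) (hv : C.Invertible v) :
    C.Invertible (fun x => u (v x)) := by
  obtain ⟨hu1, u', hu2, hu3, hu4⟩ := hu
  obtain ⟨hv1, v', hv2, hv3, hv4⟩ := hv
  exact ⟨C.unaryMem_comp hu1 hv1, fun x => v' (u' x), C.unaryMem_comp hv2 hu2,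
    fun x => by simp only []; rw [hu3, hv3], fun x => by simp only []; rw [hv4, hu4]⟩

lemma Invertible.inv {u : ℕ → ℕ} (hu : C.Invertible u) :
    ∃ v, C.Invertible v ∧ (∀ x, v (u x) = x) ∧ (∀ x, u (v x) = x) := by
  obtain ⟨hu1, v, hv, h1, h2⟩ := hu
  exact ⟨v, ⟨hv, u, hu1, h2, h1⟩, h1, h2⟩

/-- Pigeonhole: from any sequence of `ι`-indexed tuples, infinitely many lie in a
common orbit on the finite window `F`. -/
lemma pigeon {ι : Type} (holig : C.Oligo) (F : Finset ι) (h : ℕ → ι → ℕ) :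
    ∃ M : Set ℕ, M.Infinite ∧
      ∀ m ∈ M, ∀ m' ∈ M, ∃ u, C.Invertible u ∧ ∀ i ∈ F, u (h m i) = h m' i := by
  obtain ⟨N, reps, hreps⟩ := holig F.card
  choose idx u hu heq using fun m => hreps (fun j => h m (F.equivFin.symm j : ι))
  have : Nonempty (Fin N) := by
    rcases Nat.eq_zero_or_pos N with h0 | h0
    · exfalso; exact absurd (idx 0).2 (by omega)
    · exact ⟨⟨0, h0⟩⟩
  obtain ⟨c, hc⟩ := Finite.exists_infinite_fiber idx
  refine ⟨idx ⁻¹' {c}, Set.infinite_coe_iff.mp hc, ?_⟩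
  intro m hm m' hm'
  obtain ⟨v, hv, hvu, huv⟩ := Invertible.inv C (hu m)
  refine ⟨fun x => u m' (v x), Invertible.comp' C (hu m') hv, ?_⟩
  intro i hi
  have key : ∀ m'', idx m'' = c → h m'' i = u m'' (reps c (F.equivFin ⟨i, hi⟩)) := by
    intro m'' hm''
    have := congrFun (heq m'') (F.equivFin ⟨i, hi⟩)
    simp only [Equiv.symm_apply_apply] at this
    rw [← this, hm'']
  rw [key m hm, key m' hm']; simp only []; rw [hvu]


section Key
variable {ι : Type} (W : ℕ → Set (ι → ℕ))

/-- One step of the compactness recursion. -/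
lemma step (holig : C.Oligo)
    (hWanti : ∀ {m m'}, m ≤ m' → W m' ⊆ W m)
    (hWinv : ∀ k w u, w ∈ W k → C.Invertible u → (fun i => u (w i)) ∈ W k)
    (E F : Finset ι) (g : ι → ℕ)
    (hg : ∀ m, ∃ w ∈ W m, ∃ u, C.Invertible u ∧ ∀ i ∈ E, u (w i) = g i) :
    ∃ g' : ι → ℕ, (∀ i ∈ E, g' i = g i) ∧
      ∀ m, ∃ w ∈ W m, ∃ u, C.Invertible u ∧ ∀ i ∈ F, u (w i) = g' i := by
  choose w hw u hu hagree using hg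
  set h : ℕ → ι → ℕ := fun m i => u m (w m i) with hh
  have hhW : ∀ m, h m ∈ W m := fun m => hWinv m (w m) (u m) (hw m) (hu m)
  have hhE : ∀ m, ∀ i ∈ E, h m i = g i := fun m i hi => hagree m i hi
  obtain ⟨M, hMinf, hM⟩ := C.pigeon holig F h
  obtain ⟨m₀, hm₀⟩ := hMinf.nonempty
  refine ⟨h m₀, fun i hi => hhE m₀ i hi, ?_⟩
  intro m
  obtain ⟨m', hm'M, hm'ge⟩ := hMinf.exists_gt m
  obtain ⟨u', hu', heq⟩ := hM m' hm'M m₀ hm₀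
  exact ⟨h m', hWanti hm'ge.le (hhW m'), u', hu', heq⟩

/-- Abstract compactness lemma. -/
lemma key (holig : C.Oligo)
    (D : ℕ → Finset ι) (hDmono : ∀ k, D k ⊆ D (k + 1)) (hDexh : ∀ i, ∃ k, i ∈ D k)
    (hWanti : ∀ {m m'}, m ≤ m' → W m' ⊆ W m)
    (hWne : ∀ k, (W k).Nonempty)
    (hWinv : ∀ k w u, w ∈ W k → C.Invertible u → (fun i => u (w i)) ∈ W k)
    (hWloc : ∀ k w w', w ∈ W k → (∀ i ∈ D k, w' i = w i) → w' ∈ W k) :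
    ∃ w, ∀ k, w ∈ W k := by
  have hDle : ∀ {k k'}, k ≤ k' → D k ⊆ D k' := by
    intro k k' hk
    induction hk with
    | refl => exact fun _ h => h
    | step _ ih => exact fun i hi => hDmono _ (ih hi)
  set Good : ℕ → (ι → ℕ) → Prop :=
    fun k g => ∀ m, ∃ w ∈ W m, ∃ u, C.Invertible u ∧ ∀ i ∈ D k, u (w i) = g i with hGood
  have hstep : ∀ k (g : ι → ℕ), Good k g →
      ∃ g' : ι → ℕ, (∀ i ∈ D k, g' i = g i) ∧ Good (k + 1) g' := by
    intro k g hg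
    exact C.step W holig hWanti hWinv (D k) (D (k + 1)) g hg
  have hbase : ∃ g, Good 0 g := by
    obtain ⟨g, _, hg⟩ := C.step W holig hWanti hWinv ∅ (D 0) (fun _ => 0)
      (fun m => by
        obtain ⟨w, hw⟩ := hWne m
        exact ⟨w, hw, fun x => x, C.invertible_id, fun i hi => absurd hi (by simp)⟩)
    exact ⟨g, hg⟩
  let T : ℕ → Type := fun k => {g : ι → ℕ // Good k g}
  let Gs : ∀ k, T k := fun k => Nat.rec ⟨hbase.choose, hbase.choose_spec⟩
    (fun k gk => ⟨(hstep k gk.1 gk.2).choose, (hstep k gk.1 gk.2).choose_spec.2⟩) k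
  have hcons : ∀ k, ∀ i ∈ D k, (Gs (k + 1)).1 i = (Gs k).1 i :=
    fun k i hi => (hstep k (Gs k).1 (Gs k).2).choose_spec.1 i hi
  have hagree : ∀ {k k'}, k ≤ k' → ∀ i ∈ D k, (Gs k').1 i = (Gs k).1 i := by
    intro k k' hk
    induction hk with
    | refl => exact fun _ _ => rfl
    | @step k'' h ih => exact fun i hi => (hcons k'' i (hDle h hi)).trans (ih i hi)
  choose K hK using hDexh
  set w : ι → ℕ := fun i => (Gs (K i)).1 i with hw
  have hwk : ∀ k, ∀ i ∈ D k, w i = (Gs k).1 i := by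
    intro k i hi
    rcases le_total (K i) k with h | h
    · rw [hw]; exact ((hagree h i (hK i)).symm)
    · exact hagree h i hi
  refine ⟨w, fun k => ?_⟩
  obtain ⟨w', hw', u, hu, heq⟩ := (Gs k).2 k
  refine hWloc k (fun i => u (w' i)) w (hWinv k w' u hw' hu) ?_
  intro i hi
  rw [hwk k i hi, ← heq i hi]

end Key
end CloneOn

/-- A closed oligomorphic clone with local pseudo-Siggers operations has a
pseudo-Siggers operation. -/
theorem stmt_8 (C : CloneOn) (hcl : C.IsClosed) (holig : C.Oligo)
    (hloc : ∀ A : Finset ℕ, ∃ s ∈ C.ops 5, ∃ α β : ℕ → ℕ,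
      C.unaryMem α ∧ C.unaryMem β ∧
      ∀ x ∈ A, ∀ y ∈ A, ∀ z ∈ A,
        α (s ![x, y, x, z, y, z]) = β (s ![y, x, z, x, z, y])) :
    ∃ s ∈ C.ops 5, ∃ α β : ℕ → ℕ,
      C.unaryMem α ∧ C.unaryMem β ∧
      ∀ x y z : ℕ, α (s ![x, y, x, z, y, z]) = β (s ![y, x, z, x, z, y]) := by
  classical
  -- Stage 1: find a global `s`.
  set D1 : ℕ → Finset (Fin 6 → ℕ) :=
    fun k => Fintype.piFinset (fun _ : Fin 6 => Finset.range (k + 1)) with hD1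
  have hD1mem : ∀ k (p : Fin 6 → ℕ), p ∈ D1 k ↔ ∀ i, p i ≤ k := by
    intro k p
    simp [hD1, Fintype.mem_piFinset, Nat.lt_succ_iff]
  have hpmem : ∀ k x y z, x ≤ k → y ≤ k → z ≤ k →
      (![x, y, x, z, y, z] : Fin 6 → ℕ) ∈ D1 k ∧ (![y, x, z, x, z, y] : Fin 6 → ℕ) ∈ D1 k := by
    intro k x y z hx hy hz
    constructor <;> (rw [hD1mem]; intro i; fin_cases i <;> simpa)
  set W1 : ℕ → Set ((Fin 6 → ℕ) → ℕ) :=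
    fun k => {w | ∃ s ∈ C.ops 5, ∃ α β : ℕ → ℕ, C.unaryMem α ∧ C.unaryMem β ∧
      (∀ x ≤ k, ∀ y ≤ k, ∀ z ≤ k,
        α (s ![x, y, x, z, y, z]) = β (s ![y, x, z, x, z, y])) ∧
      ∀ p ∈ D1 k, w p = s p} with hW1
  have hW1anti : ∀ {m m'}, m ≤ m' → W1 m' ⊆ W1 m := by
    intro m m' hm w hwm
    obtain ⟨s, hs, α, β, hα, hβ, hid, hag⟩ := hwm
    exact ⟨s, hs, α, β, hα, hβ,
      fun x hx y hy z hz => hid x (hx.trans hm) y (hy.trans hm) z (hz.trans hm),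
      fun p hp => hag p (by rw [hD1mem] at hp ⊢; exact fun i => (hp i).trans hm)⟩
  obtain ⟨s, hsW⟩ := C.key W1 holig D1
    (by
      intro k p hp
      rw [hD1mem] at hp ⊢
      exact fun i => (hp i).trans (Nat.le_succ k))
    (by
      intro p
      exact ⟨Finset.univ.sup p, (hD1mem _ p).2 fun i => Finset.le_sup (Finset.mem_univ i)⟩)
    hW1anti
    (by
      intro k
      obtain ⟨s, hs, α, β, hα, hβ, hid⟩ := hloc (Finset.range (k + 1))
      exact ⟨s, s, hs, α, β, hα, hβ,
        fun x hx y hy z hz => hid x (Finset.mem_range.2 (Nat.lt_succ_of_le hx))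
          y (Finset.mem_range.2 (Nat.lt_succ_of_le hy)) z (Finset.mem_range.2 (Nat.lt_succ_of_le hz)),
        fun p _ => rfl⟩)
    (by
      intro k w u hw hu
      obtain ⟨s, hs, α, β, hα, hβ, hid, hag⟩ := hw
      obtain ⟨v, hv, hvu, huv⟩ := CloneOn.Invertible.inv C hu
      refine ⟨fun p => u (s p),
        C.comp_mem 0 5 (fun x => u (x 0)) (fun _ => s) hu.1 (fun _ => hs),
        fun x => α (v x), fun x => β (v x),
        C.unaryMem_comp hα hv.1, C.unaryMem_comp hβ hv.1, ?_, fun p hp => show u (w p) = u (s p) from congrArg u (hag p hp)⟩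
      intro x hx y hy z hz
      simp only [hvu]
      exact hid x hx y hy z hz)
    (by
      intro k w w' hw hww'
      obtain ⟨s, hs, α, β, hα, hβ, hid, hag⟩ := hw
      exact ⟨s, hs, α, β, hα, hβ, hid, fun p hp => (hww' p hp).trans (hag p hp)⟩)
  -- `s` is in the clone.
  have hsops : s ∈ C.ops 5 := by
    apply hcl 5 s
    intro F
    set k : ℕ := F.sup (fun p => Finset.univ.sup p) with hk
    obtain ⟨s', hs', α, β, hα, hβ, hid, hag⟩ := hsW k
    refine ⟨s', hs', fun p hp => (hag p ?_).symm⟩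
    rw [hD1mem]
    intro i
    refine le_trans (Finset.le_sup (f := p) (Finset.mem_univ i)) ?_
    rw [hk]
    exact Finset.le_sup hp
  -- local identities for `s` itself
  have hsid : ∀ k, ∃ α β : ℕ → ℕ, C.unaryMem α ∧ C.unaryMem β ∧
      ∀ x ≤ k, ∀ y ≤ k, ∀ z ≤ k,
        α (s ![x, y, x, z, y, z]) = β (s ![y, x, z, x, z, y]) := by
    intro k
    obtain ⟨s', hs', α, β, hα, hβ, hid, hag⟩ := hsW k
    refine ⟨α, β, hα, hβ, fun x hx y hy z hz => ?_⟩
    obtain ⟨h1, h2⟩ := hpmem k x y z hx hy hz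
    rw [hag _ h1, hag _ h2]
    exact hid x hx y hy z hz
  -- Stage 2: find global α, β.
  set SV : ℕ → Finset ℕ := fun k =>
    Finset.range (k + 1)
    ∪ ((Finset.range (k + 1) ×ˢ Finset.range (k + 1) ×ˢ Finset.range (k + 1)).image
        fun t => s ![t.1, t.2.1, t.1, t.2.2, t.2.1, t.2.2])
    ∪ ((Finset.range (k + 1) ×ˢ Finset.range (k + 1) ×ˢ Finset.range (k + 1)).image
        fun t => s ![t.2.1, t.1, t.2.2, t.1, t.2.2, t.2.1]) with hSV
  have hSVmono : ∀ {m m'}, m ≤ m' → SV m ⊆ SV m' := by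
    intro m m' h
    have hr : Finset.range (m + 1) ⊆ Finset.range (m' + 1) := by
      intro x hx; simp only [Finset.mem_range] at *; omega
    exact Finset.union_subset_union
      (Finset.union_subset_union hr
        (Finset.image_subset_image (Finset.product_subset_product hr
          (Finset.product_subset_product hr hr))))
      (Finset.image_subset_image (Finset.product_subset_product hr
        (Finset.product_subset_product hr hr)))
  set D2 : ℕ → Finset (Bool × ℕ) := fun k => Finset.univ ×ˢ SV k with hD2
  set W2 : ℕ → Set (Bool × ℕ → ℕ) := fun k =>
    {w | ∃ α β : ℕ → ℕ, C.unaryMem α ∧ C.unaryMem β ∧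
      (∀ x ≤ k, ∀ y ≤ k, ∀ z ≤ k,
        α (s ![x, y, x, z, y, z]) = β (s ![y, x, z, x, z, y])) ∧
      ∀ n ∈ SV k, w (false, n) = α n ∧ w (true, n) = β n} with hW2
  have hrangeSV : ∀ k n, n ≤ k → n ∈ SV k := by
    intro k n h
    exact Finset.mem_union_left _ (Finset.mem_union_left _ (Finset.mem_range.2 (by omega)))
  have hW2anti : ∀ {m m'}, m ≤ m' → W2 m' ⊆ W2 m := by
    intro m m' h w hw
    obtain ⟨α, β, hα, hβ, hid, hag⟩ := hw
    exact ⟨α, β, hα, hβ,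
      fun x hx y hy z hz => hid x (hx.trans h) y (hy.trans h) z (hz.trans h),
      fun n hn => hag n (hSVmono h hn)⟩
  obtain ⟨w, hwW⟩ := C.key W2 holig D2
    (by
      intro k p hp
      rw [hD2, Finset.mem_product] at hp ⊢
      exact ⟨hp.1, hSVmono (Nat.le_succ k) hp.2⟩)
    (by
      intro p
      exact ⟨p.2, by
        rw [hD2, Finset.mem_product]
        exact ⟨Finset.mem_univ _, hrangeSV p.2 p.2 le_rfl⟩⟩)
    hW2anti
    (by
      intro k
      obtain ⟨α, β, hα, hβ, hid⟩ := hsid k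
      refine ⟨fun p => if p.1 then β p.2 else α p.2, α, β, hα, hβ, hid, fun n hn => ?_⟩
      constructor <;> simp)
    (by
      intro k w u hw hu
      obtain ⟨α, β, hα, hβ, hid, hag⟩ := hw
      refine ⟨fun x => u (α x), fun x => u (β x),
        C.unaryMem_comp hu.1 hα, C.unaryMem_comp hu.1 hβ,
        fun x hx y hy z hz => congrArg u (hid x hx y hy z hz),
        fun n hn => ⟨congrArg u (hag n hn).1, congrArg u (hag n hn).2⟩⟩)
    (by
      intro k w w' hw hww'
      obtain ⟨α, β, hα, hβ, hid, hag⟩ := hw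
      refine ⟨α, β, hα, hβ, hid, fun n hn => ?_⟩
      have h1 : ((false, n) : Bool × ℕ) ∈ D2 k := by
        rw [hD2, Finset.mem_product]; exact ⟨Finset.mem_univ _, hn⟩
      have h2 : ((true, n) : Bool × ℕ) ∈ D2 k := by
        rw [hD2, Finset.mem_product]; exact ⟨Finset.mem_univ _, hn⟩
      exact ⟨(hww' _ h1).trans (hag n hn).1, (hww' _ h2).trans (hag n hn).2⟩)
  set α : ℕ → ℕ := fun n => w (false, n) with hαdef
  set β : ℕ → ℕ := fun n => w (true, n) with hβdef
  have hαβmem : C.unaryMem α ∧ C.unaryMem β := by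
    constructor <;>
    · apply hcl 0
      intro F
      set k : ℕ := F.sup (fun x => x 0) with hk
      obtain ⟨α', β', hα', hβ', hid, hag⟩ := hwW k
      have hxk : ∀ x ∈ F, (x : Fin 1 → ℕ) 0 ≤ k := by
        intro x hx
        rw [hk]
        exact Finset.le_sup (f := fun x : Fin 1 → ℕ => x 0) hx
      first
      | exact ⟨fun x => α' (x 0), hα', fun x hx =>
          ((hag (x 0) (hrangeSV k (x 0) (hxk x hx))).1).symm⟩
      | exact ⟨fun x => β' (x 0), hβ', fun x hx =>
          ((hag (x 0) (hrangeSV k (x 0) (hxk x hx))).2).symm⟩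
  refine ⟨s, hsops, α, β, hαβmem.1, hαβmem.2, ?_⟩
  intro x y z
  set k : ℕ := max x (max y z) with hk
  obtain ⟨α', β', hα', hβ', hid, hag⟩ := hwW k
  have hx : x ≤ k := le_max_left _ _
  have hy : y ≤ k := le_trans (le_max_left _ _) (le_max_right _ _)
  have hz : z ≤ k := le_trans (le_max_right _ _) (le_max_right _ _)
  have hmem1 : s ![x, y, x, z, y, z] ∈ SV k := by
    refine Finset.mem_union_left _ (Finset.mem_union_right _ ?_)
    refine Finset.mem_image.2 ⟨(x, y, z), ?_, rfl⟩
    simp only [Finset.mem_product, Finset.mem_range]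
    exact ⟨by omega, by omega, by omega⟩
  have hmem2 : s ![y, x, z, x, z, y] ∈ SV k := by
    refine Finset.mem_union_right _ ?_
    refine Finset.mem_image.2 ⟨(x, y, z), ?_, rfl⟩
    simp only [Finset.mem_product, Finset.mem_range]
    exact ⟨by omega, by omega, by omega⟩
  calc α (s ![x, y, x, z, y, z]) = α' (s ![x, y, x, z, y, z]) := (hag _ hmem1).1
    _ = β' (s ![y, x, z, x, z, y]) := hid x hx y hy z hz
    _ = β (s ![y, x, z, x, z, y]) := ((hag _ hmem2).2).symm
end

section
/- Let A be an ω-categorical core structure whose polymorphism clone contains a pseudo-Siggers operation s with witnesses α, β. Then for any finitely many elements c_1,…,c_n of A, the stabilizer Pol(A, c_1,…,c_n) also contains a pseudo-Siggers operation. Specifically, if ε, θ are automorphisms of A agreeing on {c_1,…,c_n} with the endomorphisms x ↦ s(x,…,x) and x ↦ α(s(x,…,x)) respectively, then ε⁻¹s is a pseudo-Siggers operation of the stabilizer with witnesses θ⁻¹αε and θ⁻¹βε. -/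
/-- Composition of unary members is a unary member. -/
lemma CloneOn.unaryMem_comp_s9 (C : CloneOn) {u v : ℕ → ℕ}
    (hu : C.unaryMem u) (hv : C.unaryMem v) : C.unaryMem (fun a => u (v a)) := by
  have := C.comp_mem 0 0 (fun x => u (x 0)) (fun _ => fun x => v (x 0)) hu (fun _ => hv)
  exact this

/-- If the polymorphism clone of an ω-categorical core has a pseudo-Siggers operation,
then so does every stabilizer by finitely many constants `c₁,…,cₙ`. -/
theorem stmt_9 (C : CloneOn) (holig : C.Oligo)
    -- core: every endomorphism agrees with some automorphism on each finite set
    (hcore : ∀ u : ℕ → ℕ, C.unaryMem u → ∀ F : Finset ℕ,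
      ∃ g : ℕ → ℕ, C.Invertible g ∧ ∀ x ∈ F, g x = u x)
    (s : (Fin 6 → ℕ) → ℕ) (hs : s ∈ C.ops 5)
    (α β : ℕ → ℕ) (hα : C.unaryMem α) (hβ : C.unaryMem β)
    (hsig : ∀ x y z : ℕ, α (s ![x, y, x, z, y, z]) = β (s ![y, x, z, x, z, y]))
    (n : ℕ) (c : Fin n → ℕ) :
    ∃ s' : (Fin 6 → ℕ) → ℕ, ∃ α' β' : ℕ → ℕ,
      s' ∈ C.ops 5 ∧ C.unaryMem α' ∧ C.unaryMem β' ∧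
      -- s', α', β' preserve each singleton {cᵢ}, i.e. lie in the stabilizer
      (∀ i, s' (fun _ => c i) = c i) ∧
      (∀ i, α' (c i) = c i) ∧ (∀ i, β' (c i) = c i) ∧
      -- and they satisfy the pseudo-Siggers identity
      (∀ x y z : ℕ, α' (s' ![x, y, x, z, y, z]) = β' (s' ![y, x, z, x, z, y])) := by
  classical
  -- the diagonal endomorphism e
  set e : ℕ → ℕ := fun a => s (fun _ => a) with he
  have hse : C.unaryMem e := by
    have := C.comp_mem 5 0 s (fun _ => fun x => x 0) hs (fun _ => C.proj_mem 0 0)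
    exact this
  have hαe : C.unaryMem (fun a => α (e a)) := C.unaryMem_comp_s9 hα hse
  set F : Finset ℕ := Finset.image c Finset.univ with hF
  obtain ⟨ε, ⟨hεu, ε', hε'u, hε'ε, hεε'⟩, hεeq⟩ := hcore e hse F
  obtain ⟨θ, ⟨hθu, θ', hθ'u, hθ'θ, hθθ'⟩, hθeq⟩ := hcore (fun a => α (e a)) hαe F
  have hcF : ∀ i, c i ∈ F := fun i => Finset.mem_image.mpr ⟨i, Finset.mem_univ i, rfl⟩
  refine ⟨fun x => ε' (s x), fun a => θ' (α (ε a)), fun a => θ' (β (ε a)), ?_, ?_, ?_, ?_, ?_, ?_, ?_⟩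
  · have := C.comp_mem 0 5 (fun x => ε' (x 0)) (fun _ => s) hε'u (fun _ => hs)
    exact this
  · exact C.unaryMem_comp_s9 hθ'u (C.unaryMem_comp_s9 hα hεu)
  · exact C.unaryMem_comp_s9 hθ'u (C.unaryMem_comp_s9 hβ hεu)
  · intro i
    dsimp only
    have : s (fun _ => c i) = ε (c i) := (hεeq _ (hcF i)).symm
    rw [this, hε'ε]
  · intro i
    dsimp only
    have : α (ε (c i)) = θ (c i) := by rw [hεeq _ (hcF i)]; exact (hθeq _ (hcF i)).symm
    rw [this, hθ'θ]
  · intro i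
    have hdiag : β (e (c i)) = α (e (c i)) := by
      have := hsig (c i) (c i) (c i)
      have h1 : (![c i, c i, c i, c i, c i, c i] : Fin 6 → ℕ) = fun _ => c i := by
        funext j; fin_cases j <;> rfl
      rw [h1] at this
      exact this.symm
    dsimp only
    have : β (ε (c i)) = θ (c i) := by
      rw [hεeq _ (hcF i)]
      rw [hdiag]
      exact (hθeq _ (hcF i)).symm
    rw [this, hθ'θ]
  · intro x y z
    dsimp only
    rw [hεε', hεε', hsig]
end
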